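/- Let m ≥ 2 and let p_j ∈ ℝ², j = 1,…,m, be pairwise distinct points. Then the function f : ℝ × S¹ → ℝ, f(c,n) = max_{j=1,…,m} |c − ⟨p_j, n⟩|, attains its global minimum, and the set of lines {q ∈ ℝ² : ⟨q, n⟩ = c} corresponding to global minimizers (c, n) is finite. -/

import Mathlib

lemma sq_eq_set_finite (e : ℝ) : {t : ℝ | t ^ 2 = e}.Finite := by
  apply Set.Finite.subset ((Set.finite_singleton (-Real.sqrt e)).insert (Real.sqrt e))
  intro t ht
  have ht' : t ^ 2 = e := ht
  simp only [Set.mem_insert_iff, Set.mem_singleton_iff]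
  have h : Real.sqrt e = |t| := by rw [← ht', Real.sqrt_sq_eq_abs]
  rcases abs_cases t with ⟨h1, _⟩ | ⟨h1, _⟩
  · left; rw [h, h1]
  · right; rw [h, h1, neg_neg]

lemma line_circle_finite (a b d : ℝ) (h : a ≠ 0 ∨ b ≠ 0 ∨ d ≠ 0) :
    {x : ℝ × ℝ | x.1 ^ 2 + x.2 ^ 2 = 1 ∧ a * x.1 + b * x.2 = d}.Finite := by
  by_cases hab : a = 0 ∧ b = 0
  · obtain ⟨ha, hb⟩ := hab
    have hd : d ≠ 0 := by tauto
    convert Set.finite_empty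
    ext x
    simp only [Set.mem_setOf_eq, ha, hb, zero_mul, add_zero, Set.mem_empty_iff_false,
      iff_false, not_and]
    intro _ hc
    exact hd hc.symm
  · have hr : 0 < a ^ 2 + b ^ 2 := by
      rcases not_and_or.mp hab with ha | hb
      · have h2 : 0 < a ^ 2 := lt_of_le_of_ne (sq_nonneg a) (Ne.symm (pow_ne_zero 2 ha))
        nlinarith [sq_nonneg b]
      · have h2 : 0 < b ^ 2 := lt_of_le_of_ne (sq_nonneg b) (Ne.symm (pow_ne_zero 2 hb))
        nlinarith [sq_nonneg a]
    apply Set.Finite.subset ((sq_eq_set_finite (a ^ 2 + b ^ 2 - d ^ 2)).image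
      (fun t => ((a * d - b * t) / (a ^ 2 + b ^ 2), (b * d + a * t) / (a ^ 2 + b ^ 2))))
    rintro ⟨x, y⟩ ⟨hc, hl⟩
    simp only at hc hl
    refine ⟨-b * x + a * y, ?_, ?_⟩
    · have key : (-b * x + a * y) ^ 2 + (a * x + b * y) ^ 2
          = (a ^ 2 + b ^ 2) * (x ^ 2 + y ^ 2) := by ring
      rw [hl, hc] at key
      simp only [Set.mem_setOf_eq]
      linarith
    · have hrne : a ^ 2 + b ^ 2 ≠ 0 := ne_of_gt hr
      simp only [Prod.mk.injEq]
      constructor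
      · rw [← hl]; field_simp; ring
      · rw [← hl]; field_simp; ring

/-- The geometric L∞-distance `f(c,n) = max_j |c - ⟨p_j, n⟩|` over
`ℝ × S¹` attains its global minimum, and the set of lines corresponding to global
minimizers is finite. -/
theorem stmt_18 (m : ℕ) (hm : 2 ≤ m) (p : Fin m → ℝ × ℝ)
    (hp : Function.Injective p) :
    let f : ℝ → ℝ → ℝ → ℝ := fun c n₁ n₂ =>
      Finset.univ.sup' ⟨⟨0, by omega⟩, Finset.mem_univ _⟩ fun j =>
        |c - ((p j).1 * n₁ + (p j).2 * n₂)|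
    (∃ c n₁ n₂ : ℝ, n₁ ^ 2 + n₂ ^ 2 = 1 ∧
      ∀ c' n₁' n₂' : ℝ, n₁' ^ 2 + n₂' ^ 2 = 1 → f c n₁ n₂ ≤ f c' n₁' n₂') ∧
    Set.Finite {L : Set (ℝ × ℝ) | ∃ c n₁ n₂ : ℝ, n₁ ^ 2 + n₂ ^ 2 = 1 ∧
      L = {q : ℝ × ℝ | q.1 * n₁ + q.2 * n₂ = c} ∧
      ∀ c' n₁' n₂' : ℝ, n₁' ^ 2 + n₂' ^ 2 = 1 → f c n₁ n₂ ≤ f c' n₁' n₂'} := by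
  intro f
  have h0 : (0 : ℕ) < m := by omega
  have h1 : (1 : ℕ) < m := by omega
  have hne : (Finset.univ : Finset (Fin m)).Nonempty := ⟨⟨0, h0⟩, Finset.mem_univ _⟩
  obtain ⟨g, hg⟩ : ∃ g : Fin m → ℝ × ℝ → ℝ,
      g = fun j n => (p j).1 * n.1 + (p j).2 * n.2 := ⟨_, rfl⟩
  obtain ⟨M, hM⟩ : ∃ M : ℝ × ℝ → ℝ,
      M = fun n => Finset.univ.sup' hne (fun j => g j n) := ⟨_, rfl⟩
  obtain ⟨mn, hmn⟩ : ∃ mn : ℝ × ℝ → ℝ,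
      mn = fun n => Finset.univ.inf' hne (fun j => g j n) := ⟨_, rfl⟩
  obtain ⟨F, hF⟩ : ∃ F : ℝ → ℝ × ℝ → ℝ,
      F = fun c n => Finset.univ.sup' hne (fun j => |c - g j n|) := ⟨_, rfl⟩
  set S : Set (ℝ × ℝ) := {n : ℝ × ℝ | n.1 ^ 2 + n.2 ^ 2 = 1} with hS
  have hfF : ∀ (c n₁ n₂ : ℝ), f c n₁ n₂ = F c (n₁, n₂) := by
    intro c n₁ n₂
    simp only [hF, hg, f]
  have hMle : ∀ (j : Fin m) (n : ℝ × ℝ), g j n ≤ M n := by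
    intro j n; simp only [hM]; exact Finset.le_sup' (fun j => g j n) (Finset.mem_univ j)
  have hmnle : ∀ (j : Fin m) (n : ℝ × ℝ), mn n ≤ g j n := by
    intro j n; simp only [hmn]; exact Finset.inf'_le (fun j => g j n) (Finset.mem_univ j)
  have hFle' : ∀ (c : ℝ) (n : ℝ × ℝ) (j : Fin m), |c - g j n| ≤ F c n := by
    intro c n j; simp only [hF]; exact Finset.le_sup' (fun j => |c - g j n|) (Finset.mem_univ j)
  -- lower bound : 2 * F c n ≥ M n - mn n
  have hlow : ∀ (c : ℝ) (n : ℝ × ℝ), M n - mn n ≤ 2 * F c n := by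
    intro c n
    obtain ⟨j, -, hj⟩ := Finset.exists_mem_eq_sup' hne (fun j => g j n)
    obtain ⟨k, -, hk⟩ := Finset.exists_mem_eq_inf' hne (fun j => g j n)
    have hjM : M n = g j n := by simp only [hM]; exact hj
    have hkm : mn n = g k n := by simp only [hmn]; exact hk
    have b1 := hFle' c n j
    have b2 := hFle' c n k
    have h3 := abs_le.mp (le_refl |c - g j n|)
    have h4 := abs_le.mp (le_refl |c - g k n|)
    linarith [h3.1, h4.2]
  -- upper bound at the midpoint
  have hup : ∀ (n : ℝ × ℝ), F ((M n + mn n) / 2) n ≤ (M n - mn n) / 2 := by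
    intro n
    simp only [hF]
    apply Finset.sup'_le
    intro j _
    have e1 := hMle j n
    have e2 := hmnle j n
    rw [abs_le]
    constructor <;> linarith
  -- the sphere is compact and nonempty
  have hSne : S.Nonempty := ⟨(1, 0), by simp [hS]⟩
  have hScl : IsClosed S := isClosed_eq (by fun_prop) continuous_const
  have hSbd : Bornology.IsBounded S := by
    apply Bornology.IsBounded.subset (Metric.isBounded_closedBall (x := (0 : ℝ × ℝ)) (r := 1))
    intro n hn
    have hn' : n.1 ^ 2 + n.2 ^ 2 = 1 := hn
    simp only [Metric.mem_closedBall, dist_zero_right, Prod.norm_def, Real.norm_eq_abs,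
      max_le_iff]
    constructor
    · rw [abs_le]; constructor <;> nlinarith [sq_nonneg n.2]
    · rw [abs_le]; constructor <;> nlinarith [sq_nonneg n.1]
  have hScompact : IsCompact S := Metric.isCompact_of_isClosed_isBounded hScl hSbd
  -- width is continuous
  have hwcont : ContinuousOn (fun n => M n - mn n) S := by
    rw [hM, hmn, hg]
    apply ContinuousOn.sub
    · exact (Continuous.finset_sup'_apply hne (fun j _ => by fun_prop)).continuousOn
    · exact (Continuous.finset_inf'_apply hne (fun j _ => by fun_prop)).continuousOn
  obtain ⟨ns, hnsS, hnsmin⟩ := hScompact.exists_isMinOn hSne hwcont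
  have hnsmin' : ∀ n ∈ S, M ns - mn ns ≤ M n - mn n := fun n hn => isMinOn_iff.mp hnsmin n hn
  have hnsS' : ns.1 ^ 2 + ns.2 ^ 2 = 1 := hnsS
  -- global minimality of the midpoint line in direction ns
  have hglobal : ∀ (c' n₁' n₂' : ℝ), n₁' ^ 2 + n₂' ^ 2 = 1 →
      F ((M ns + mn ns) / 2) ns ≤ F c' (n₁', n₂') := by
    intro c' n₁' n₂' hn'
    have a1 := hup ns
    have a2 := hlow c' (n₁', n₂')
    have a3 := hnsmin' (n₁', n₂') hn'
    linarith
  constructor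
  · refine ⟨(M ns + mn ns) / 2, ns.1, ns.2, hnsS', ?_⟩
    intro c' n₁' n₂' hn'
    rw [hfF, hfF]
    simpa using hglobal c' n₁' n₂' hn'
  · -- finiteness of the set of minimizing lines
    have hNfin : {n : ℝ × ℝ | n ∈ S ∧ M n - mn n = M ns - mn ns}.Finite := by
      by_cases hw : M ns - mn ns = 0
      · -- degenerate case: all minimizing normals are orthogonal to p j₀ - p j₁
        have hj01 : (⟨0, h0⟩ : Fin m) ≠ ⟨1, h1⟩ := by simp [Fin.ext_iff]
        have hpne : p ⟨0, h0⟩ ≠ p ⟨1, h1⟩ := fun hpp => hj01 (hp hpp)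
        have hab : (p ⟨0, h0⟩).1 - (p ⟨1, h1⟩).1 ≠ 0 ∨ (p ⟨0, h0⟩).2 - (p ⟨1, h1⟩).2 ≠ 0 := by
          by_contra hcon
          push_neg at hcon
          exact hpne (Prod.ext (by linarith [hcon.1]) (by linarith [hcon.2]))
        apply Set.Finite.subset
          (line_circle_finite ((p ⟨0, h0⟩).1 - (p ⟨1, h1⟩).1)
            ((p ⟨0, h0⟩).2 - (p ⟨1, h1⟩).2) 0 (by tauto))
        rintro n ⟨hnS, hwn⟩
        refine ⟨hnS, ?_⟩
        have e1 := hMle ⟨0, h0⟩ n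
        have e2 := hMle ⟨1, h1⟩ n
        have e3 := hmnle ⟨0, h0⟩ n
        have e4 := hmnle ⟨1, h1⟩ n
        have e5 : g ⟨0, h0⟩ n = g ⟨1, h1⟩ n := by linarith
        rw [hg] at e5
        simp only at e5
        linear_combination e5
      · -- nondegenerate case: some pair attains the (positive) minimal width
        apply Set.Finite.subset
          (Set.finite_iUnion (fun jk : Fin m × Fin m =>
            line_circle_finite ((p jk.1).1 - (p jk.2).1) ((p jk.1).2 - (p jk.2).2)
              (M ns - mn ns) (Or.inr (Or.inr hw))))
        rintro n ⟨hnS, hwn⟩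
        obtain ⟨j, -, hj⟩ := Finset.exists_mem_eq_sup' hne (fun j => g j n)
        obtain ⟨k, -, hk⟩ := Finset.exists_mem_eq_inf' hne (fun j => g j n)
        have hjM : M n = g j n := by simp only [hM]; exact hj
        have hkm : mn n = g k n := by simp only [hmn]; exact hk
        refine Set.mem_iUnion.mpr ⟨(j, k), hnS, ?_⟩
        have e5 : g j n - g k n = M ns - mn ns := by linarith
        rw [hg] at e5
        simp only at e5
        linear_combination e5
    -- every minimizing line comes from a minimizing direction
    apply Set.Finite.subset
      (hNfin.image (fun n => {q : ℝ × ℝ | q.1 * n.1 + q.2 * n.2 = (M n + mn n) / 2}))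
    rintro L ⟨c, n₁, n₂, hsph, hL, hmin⟩
    have hminF : ∀ (c' n₁' n₂' : ℝ), n₁' ^ 2 + n₂' ^ 2 = 1 →
        F c (n₁, n₂) ≤ F c' (n₁', n₂') := by
      intro c' n₁' n₂' h
      have hh := hmin c' n₁' n₂' h
      rw [hfF, hfF] at hh
      exact hh
    have hFle : F c (n₁, n₂) ≤ F ((M ns + mn ns) / 2) ns := by
      simpa using hminF ((M ns + mn ns) / 2) ns.1 ns.2 hnsS'
    have hnS : (n₁, n₂) ∈ S := hsph
    have hwn : M (n₁, n₂) - mn (n₁, n₂) = M ns - mn ns := by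
      have a1 := hlow c (n₁, n₂)
      have a2 := hup ns
      have a3 := hnsmin' (n₁, n₂) hnS
      linarith
    have hFval : 2 * F c (n₁, n₂) = M (n₁, n₂) - mn (n₁, n₂) := by
      have a1 := hlow c (n₁, n₂)
      have a2 := hup ns
      have a3 := hglobal c n₁ n₂ hsph
      linarith
    have hc : c = (M (n₁, n₂) + mn (n₁, n₂)) / 2 := by
      obtain ⟨j, -, hj⟩ := Finset.exists_mem_eq_sup' hne (fun j => g j (n₁, n₂))
      obtain ⟨k, -, hk⟩ := Finset.exists_mem_eq_inf' hne (fun j => g j (n₁, n₂))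
      have hjM : M (n₁, n₂) = g j (n₁, n₂) := by simp only [hM]; exact hj
      have hkm : mn (n₁, n₂) = g k (n₁, n₂) := by simp only [hmn]; exact hk
      have b1 := hFle' c (n₁, n₂) j
      have b2 := hFle' c (n₁, n₂) k
      have b3 := abs_le.mp (le_refl |c - g j (n₁, n₂)|)
      have b4 := abs_le.mp (le_refl |c - g k (n₁, n₂)|)
      linarith [b3.1, b3.2, b4.1, b4.2]
    refine ⟨(n₁, n₂), ⟨hnS, hwn⟩, ?_⟩
    rw [hL, hc]
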